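/- Let B = B(0,1) be the open unit ball in ℝⁿ and a = (0,…,0,−α) with 0 ≤ α < 1. Then the Lebesgue measure of the polar of B − a satisfies |(B − a)°| = (1 − α²)^{−(n+1)/2} · |B(0,1)|. Equivalently, writing δ = 1 − α = dist(a, ∂B), |(B − a)°| = |B(0,1)| / [δ(2 − δ)]^{(n+1)/2}. -/

import Mathlib

/-!
Since `sup_{‖x‖<1} ⟪x, y⟫ = ‖y‖`, the polar of `B - a` is `{y | ‖y‖ - ⟪a, y⟫ ≤ 1}`, which for
`a = -α eₙ` is `{y | ‖y‖ + α yₙ ≤ 1}`. Squaring `‖y‖ ≤ 1 - α yₙ` shows that this is the ellipsoid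
`(1 - α²) ‖y'‖² + ((1 - α²) yₙ + α)² ≤ 1`, the preimage of the closed unit ball under
`y ↦ D y + α eₙ` with `D = diag(√(1 - α²), …, √(1 - α²), 1 - α²)`. Hence its volume is
`|B| / det D = (1 - α²)^(-(n+1)/2) |B|`.
-/

open scoped RealInnerProductSpace
open MeasureTheory

/-- The polar of a set `S ⊆ ℝⁿ`. -/
def realPolar {n : ℕ} (S : Set (EuclideanSpace ℝ (Fin n))) :
    Set (EuclideanSpace ℝ (Fin n)) :=
  {y | ∀ x ∈ S, ⟪x, y⟫ ≤ 1}

theorem norm_le_of_forall_norm_lt_one_inner_le {E : Type*} [NormedAddCommGroup E]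
    [InnerProductSpace ℝ E] {y : E} {c : ℝ} (h : ∀ x : E, ‖x‖ < 1 → ⟪x, y⟫ ≤ c) :
    ‖y‖ ≤ c := by
  rw [← innerSL_apply_norm ℝ y, ← ContinuousLinearMap.sSup_unit_ball_eq_norm]
  refine csSup_le ((Metric.nonempty_ball.2 one_pos).image _) ?_
  rintro - ⟨x, hx, rfl⟩
  rw [mem_ball_zero_iff] at hx
  have hneg := h (-x) (by rwa [norm_neg])
  rw [inner_neg_left] at hneg
  dsimp only
  rw [innerSL_apply_apply, real_inner_comm, Real.norm_eq_abs, abs_le]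
  exact ⟨by linarith, h x hx⟩

theorem realPolar_image_sub_ball {n : ℕ} (a : EuclideanSpace ℝ (Fin n)) :
    realPolar ((fun x => x - a) '' Metric.ball 0 1) = {y | ‖y‖ - ⟪a, y⟫ ≤ 1} := by
  ext y
  simp only [realPolar, Set.forall_mem_image, mem_ball_zero_iff, inner_sub_left,
    Set.mem_ofPred_eq]
  constructor
  · intro h
    have : ‖y‖ ≤ 1 + ⟪a, y⟫ :=
      norm_le_of_forall_norm_lt_one_inner_le fun x hx => by linarith [h hx]
    linarith
  · intro h x hx
    have : ⟪x, y⟫ ≤ ‖y‖ := (real_inner_le_norm x y).trans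
      (mul_le_of_le_one_left (norm_nonneg y) hx.le)
    linarith

theorem add_mul_le_one_iff_ellipsoid {α r t : ℝ} (hα : α ^ 2 < 1) (hr : 0 ≤ r)
    (ht : |t| ≤ r) :
    r + α * t ≤ 1 ↔ (1 - α ^ 2) * (r ^ 2 - t ^ 2) + ((1 - α ^ 2) * t + α) ^ 2 ≤ 1 := by
  have hβ : 0 < 1 - α ^ 2 := by linarith
  have key : (1 - α ^ 2) * (r ^ 2 - t ^ 2) + ((1 - α ^ 2) * t + α) ^ 2
      = 1 + (1 - α ^ 2) * (r ^ 2 - (1 - α * t) ^ 2) := by ring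
  rw [key, add_le_iff_nonpos_right, ← mul_zero (1 - α ^ 2),
    mul_le_mul_iff_right₀ hβ, sub_nonpos]
  constructor
  · intro h
    exact pow_le_pow_left₀ hr (by linarith) 2
  · -- if `1 - α t < 0`, then `|t| ≤ r ≤ α t - 1 < |t|` since `|α| < 1`
    intro h
    rw [sq_le_sq, abs_of_nonneg hr] at h
    cases abs_cases (1 - α * t) <;> cases abs_cases t <;> nlinarith

noncomputable def polarEllipsoidMatrix (m : ℕ) (α : ℝ) : Matrix (Fin (m + 1)) (Fin (m + 1)) ℝ :=
  Matrix.diagonal fun i => if i = Fin.last m then 1 - α ^ 2 else √(1 - α ^ 2)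

theorem det_polarEllipsoidMatrix {m : ℕ} {α : ℝ} (hα : α ^ 2 ≤ 1) :
    (polarEllipsoidMatrix m α).det = (1 - α ^ 2) ^ (((m : ℝ) + 2) / 2) := by
  have hβ : 0 ≤ 1 - α ^ 2 := by linarith
  rw [polarEllipsoidMatrix, Matrix.det_diagonal, Fin.prod_univ_castSucc]
  simp only [Fin.castSucc_ne_last, if_false, if_true, Finset.prod_const, Finset.card_univ,
    Fintype.card_fin]
  rw [Real.sqrt_eq_rpow, ← Real.rpow_natCast, ← Real.rpow_mul hβ, ← Real.rpow_add_one' hβ]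
  · ring_nf
  · positivity

theorem norm_sq_polarEllipsoidMatrix_add {m : ℕ} {α : ℝ} (hα : α ^ 2 ≤ 1)
    (y : EuclideanSpace ℝ (Fin (m + 1))) :
    ‖(polarEllipsoidMatrix m α).toEuclideanLin y + α • EuclideanSpace.single (Fin.last m) 1‖ ^ 2
      = (1 - α ^ 2) * (‖y‖ ^ 2 - y (Fin.last m) ^ 2)
        + ((1 - α ^ 2) * y (Fin.last m) + α) ^ 2 := by
  have hβ : 0 ≤ 1 - α ^ 2 := by linarith
  simp only [EuclideanSpace.norm_sq_eq, Fin.sum_univ_castSucc, Real.norm_eq_abs, sq_abs]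
  simp [polarEllipsoidMatrix, Matrix.toLpLin_apply, Matrix.mulVec_diagonal, mul_pow,
    Real.sq_sqrt hβ, Finset.mul_sum]

theorem setOf_norm_add_mul_le_one_eq_preimage {m : ℕ} {α : ℝ} (hα : α ^ 2 < 1) :
    {y : EuclideanSpace ℝ (Fin (m + 1)) | ‖y‖ + α * y (Fin.last m) ≤ 1}
      = (fun y => (polarEllipsoidMatrix m α).toEuclideanLin y
          + α • EuclideanSpace.single (Fin.last m) 1) ⁻¹' Metric.closedBall 0 1 := by
  ext y
  have hlast : |y (Fin.last m)| ≤ ‖y‖ := by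
    simpa only [Real.norm_eq_abs] using PiLp.norm_apply_le y (Fin.last m)
  rw [Set.mem_preimage, mem_closedBall_zero_iff, ← sq_le_one_iff₀ (norm_nonneg _),
    norm_sq_polarEllipsoidMatrix_add hα.le, Set.mem_ofPred_eq,
    add_mul_le_one_iff_ellipsoid hα (norm_nonneg y) hlast]

theorem volume_setOf_norm_add_mul_le_one {m : ℕ} {α : ℝ} (hα : α ^ 2 < 1) :
    volume {y : EuclideanSpace ℝ (Fin (m + 1)) | ‖y‖ + α * y (Fin.last m) ≤ 1}
      = ENNReal.ofReal ((1 - α ^ 2) ^ (-(((m : ℝ) + 2) / 2)))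
        * volume (Metric.ball (0 : EuclideanSpace ℝ (Fin (m + 1))) 1) := by
  have hβ : 0 < 1 - α ^ 2 := by linarith
  have hdet : LinearMap.det (polarEllipsoidMatrix m α).toEuclideanLin
      = (1 - α ^ 2) ^ (((m : ℝ) + 2) / 2) := by
    rw [LinearMap.det_toLpLin, det_polarEllipsoidMatrix hα.le]
  have hdet_pos : 0 < LinearMap.det (polarEllipsoidMatrix m α).toEuclideanLin := by
    rw [hdet]; positivity
  rw [setOf_norm_add_mul_le_one_eq_preimage hα, ← Set.preimage_preimage (g := fun y => y + _),
    Measure.addHaar_preimage_linearMap _ hdet_pos.ne', measure_preimage_add_right,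
    Measure.addHaar_closedBall_eq_addHaar_ball, abs_inv, abs_of_pos hdet_pos, hdet,
    Real.rpow_neg hβ.le]

/-- For the open unit ball `B ⊆ ℝⁿ` (here `n = m+1`) and
`a = -α eₙ`, `0 ≤ α < 1`:  `|(B-a)°| = (1-α²)^{-(n+1)/2} |B|`; equivalently,
with `δ = 1 - α`, `|(B-a)°| = |B| / (δ(2-δ))^{(n+1)/2}`. -/
theorem stmt9 {m : ℕ} (α : ℝ) (hα0 : 0 ≤ α) (hα1 : α < 1)
    (a : EuclideanSpace ℝ (Fin (m + 1)))
    (haof : a = (-α) • EuclideanSpace.single (Fin.last m) (1 : ℝ))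
    (B : Set (EuclideanSpace ℝ (Fin (m + 1))))
    (hB : B = Metric.ball (0 : EuclideanSpace ℝ (Fin (m + 1))) 1) :
    volume (realPolar ((fun x => x - a) '' B))
        = ENNReal.ofReal ((1 - α ^ 2) ^ (-(((m : ℝ) + 2) / 2))) * volume B ∧
      volume (realPolar ((fun x => x - a) '' B))
        = volume B / ENNReal.ofReal (((1 - α) * (2 - (1 - α))) ^ (((m : ℝ) + 2) / 2)) := by
  have hα : α ^ 2 < 1 := by nlinarith
  have hpolar : realPolar ((fun x => x - a) '' B)
      = {y | ‖y‖ + α * y (Fin.last m) ≤ 1} := by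
    rw [hB, realPolar_image_sub_ball]
    ext y
    simp [haof, real_inner_smul_left, EuclideanSpace.inner_single_left]
  rw [hpolar, volume_setOf_norm_add_mul_le_one hα, hB]
  refine ⟨rfl, ?_⟩
  rw [show (1 - α) * (2 - (1 - α)) = 1 - α ^ 2 by ring,
    Real.rpow_neg (by linarith), ENNReal.ofReal_inv_of_pos (by positivity),
    ENNReal.div_eq_inv_mul]
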